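/- arXiv:2307.04464 — 2 statements merged into one kernel-verified Lean document; each statement's English description precedes it below -/
import Mathlib

section
/- Let m ≥ 1 and n ≥ 1 be integers and let x be a real number with 0 < x < π. Then the sum over all even indices k with 0 ≤ k ≤ n of C(n-k+m, m) · cos((k+1/2)x) is strictly positive. -/
/-!
Write the sum as `∑ j ≤ n/2, c j * cos ((2j + 1/2) x)` with `c j = C(n + m - 2j, m)`. Summing by
parts twice turns it into `∑ p, (c p - 2 c (p+1) + c (p+2)) * Q p`, where
`Q p = ∑ i ≤ p, ∑ j ≤ i, cos ((2j + 1/2) x)` is a Fejér-type kernel. The second differences of `c`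
are nonnegative (binomial coefficients are convex in the upper index) and the last one is positive,
while telescoping gives `4 sin² x · Q p = 2N sin x sin (x/2) + cos (x/2) - cos ((2N + 1/2) x)`
with `N = p + 1`, which is positive on `(0, π)` because `|sin (2N x)| ≤ 2N sin x`.
-/

open Real Finset

section SummationByParts

variable {R : Type*} [CommRing R]

theorem sum_range_mul_eq_by_parts (c u : ℕ → R) (N : ℕ) :
    ∑ j ∈ range N, c j * u j =
      c N * ∑ j ∈ range N, u j +
        ∑ p ∈ range N, (c p - c (p + 1)) * ∑ j ∈ range (p + 1), u j := by
  induction N with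
  | zero => simp
  | succ N ih =>
    rw [sum_range_succ, ih, sum_range_succ (fun p => (c p - c (p + 1)) * _), sum_range_succ u]
    ring

theorem sum_range_mul_eq_by_parts_twice (c u : ℕ → R) {N : ℕ} (h₁ : c N = 0)
    (h₂ : c (N + 1) = 0) :
    ∑ j ∈ range N, c j * u j =
      ∑ p ∈ range N, (c p - 2 * c (p + 1) + c (p + 2)) *
        ∑ i ∈ range (p + 1), ∑ j ∈ range (i + 1), u j := by
  rw [sum_range_mul_eq_by_parts c u, h₁, zero_mul, zero_add,
    sum_range_mul_eq_by_parts (fun p => c p - c (p + 1)), h₁, h₂, sub_zero, zero_mul, zero_add]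
  refine sum_congr rfl fun p _ => ?_
  ring

end SummationByParts

theorem sum_filter_even_range {M : Type*} [AddCommMonoid M] (f : ℕ → M) (n : ℕ) :
    ∑ k ∈ (range (n + 1)).filter (fun k => Even k), f k =
      ∑ j ∈ range (n / 2 + 1), f (2 * j) := by
  have himage : (range (n + 1)).filter (fun k => Even k) = (range (n / 2 + 1)).image (2 * ·) := by
    ext k
    simp only [mem_filter, mem_range, mem_image, Nat.even_iff]
    constructor
    · rintro ⟨hk, heven⟩
      exact ⟨k / 2, by omega, by omega⟩
    · rintro ⟨j, hj, rfl⟩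
      omega
  rw [himage, sum_image fun a _ b _ h => by omega]

theorem two_mul_choose_sub_two_le {m : ℕ} (hm : 1 ≤ m) (N : ℕ) :
    2 * (N - 2).choose m ≤ N.choose m + (N - 4).choose m := by
  obtain ⟨m, rfl⟩ : ∃ k, m = k + 1 := ⟨m - 1, by omega⟩
  rcases le_or_gt 4 N with hN | hN
  · obtain ⟨s, rfl⟩ : ∃ s, N = s + 4 := ⟨N - 4, by omega⟩
    rw [show s + 4 - 2 = s + 2 by omega, Nat.add_sub_cancel]
    have h₁ : (s + 1).choose m ≤ (s + 3).choose m := Nat.choose_le_choose m (by omega)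
    have h₂ : s.choose m ≤ (s + 2).choose m := Nat.choose_le_choose m (by omega)
    simp only [Nat.choose_succ_succ', show s + 4 = s + 3 + 1 from rfl] at *
    omega
  · interval_cases N <;> rcases m with _ | m <;> simp [Nat.choose_eq_zero_of_lt]

theorem abs_sin_nat_mul_le (n : ℕ) (x : ℝ) : |sin (n * x)| ≤ n * |sin x| := by
  induction n with
  | zero => simp
  | succ n ih =>
    rw [Nat.cast_succ, add_one_mul, sin_add]
    calc |sin (n * x) * cos x + cos (n * x) * sin x|
        ≤ |sin (n * x)| * |cos x| + |cos (n * x)| * |sin x| := by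
          rw [← abs_mul, ← abs_mul]
          exact abs_add_le _ _
      _ ≤ |sin (n * x)| * 1 + 1 * |sin x| := by
          gcongr
          · exact abs_cos_le_one x
          · exact abs_cos_le_one _
      _ ≤ (n + 1) * |sin x| := by linarith

theorem two_mul_sin_mul_sum_cos (x : ℝ) (i : ℕ) :
    2 * sin x * ∑ j ∈ range (i + 1), cos ((2 * j + 1 / 2) * x) =
      sin ((2 * i + 3 / 2) * x) + sin (x / 2) := by
  have htelescope (j : ℕ) : 2 * sin x * cos ((2 * j + 1 / 2) * x) =
      sin ((2 * (j + 1 : ℕ) - 1 / 2) * x) - sin ((2 * j - 1 / 2) * x) := by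
    rw [two_mul_sin_mul_cos, show x - (2 * j + 1 / 2) * x = -((2 * j - 1 / 2) * x) by ring, sin_neg]
    push_cast
    ring_nf
  rw [mul_sum, sum_congr rfl fun j _ => htelescope j,
    sum_range_sub (fun j : ℕ => sin ((2 * j - 1 / 2) * x))]
  push_cast
  rw [show (2 * ((i : ℝ) + 1) - 1 / 2) * x = (2 * i + 3 / 2) * x by ring,
    show (2 * 0 - 1 / 2 : ℝ) * x = -(x / 2) by ring, sin_neg, sub_neg_eq_add]

theorem two_mul_sin_mul_sum_sin (x : ℝ) (p : ℕ) :
    2 * sin x * ∑ i ∈ range (p + 1), sin ((2 * i + 3 / 2) * x) =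
      cos (x / 2) - cos ((2 * p + 5 / 2) * x) := by
  have htelescope (i : ℕ) : 2 * sin x * sin ((2 * i + 3 / 2) * x) =
      cos ((2 * i + 1 / 2) * x) - cos ((2 * (i + 1 : ℕ) + 1 / 2) * x) := by
    rw [two_mul_sin_mul_sin, show x - (2 * i + 3 / 2) * x = -((2 * i + 1 / 2) * x) by ring, cos_neg]
    push_cast
    ring_nf
  rw [mul_sum, sum_congr rfl fun i _ => htelescope i,
    sum_range_sub' (fun i : ℕ => cos ((2 * i + 1 / 2) * x))]
  push_cast
  ring_nf

theorem four_mul_sin_sq_mul_sum_sum_cos (x : ℝ) (p : ℕ) :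
    4 * sin x ^ 2 * ∑ i ∈ range (p + 1), ∑ j ∈ range (i + 1), cos ((2 * j + 1 / 2) * x) =
      2 * (p + 1) * sin x * sin (x / 2) + cos (x / 2) - cos ((2 * p + 5 / 2) * x) := by
  rw [show 4 * sin x ^ 2 = 2 * sin x * (2 * sin x) by ring, mul_assoc, mul_sum,
    sum_congr rfl fun i _ => two_mul_sin_mul_sum_cos x i, sum_add_distrib, mul_add,
    two_mul_sin_mul_sum_sin, sum_const, card_range, nsmul_eq_mul]
  push_cast
  ring

theorem two_mul_sin_mul_sin_half_add_cos_sub_cos_pos {x : ℝ} (hx : 0 < x) (hx' : x < π) {N : ℕ}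
    (hN : 1 ≤ N) :
    0 < 2 * N * sin x * sin (x / 2) + cos (x / 2) - cos ((2 * N + 1 / 2) * x) := by
  have hsin : 0 < sin x := sin_pos_of_pos_of_lt_pi hx hx'
  have hsin_half : 0 < sin (x / 2) := sin_pos_of_pos_of_lt_pi (by linarith) (by linarith)
  have hcos_half : 0 < cos (x / 2) := cos_pos_of_mem_Ioo ⟨by linarith, by linarith⟩
  have hdecomp : 2 * N * sin x * sin (x / 2) + cos (x / 2) - cos ((2 * N + 1 / 2) * x) =
      2 * sin (N * x) ^ 2 * cos (x / 2) +
        sin (x / 2) * (2 * N * sin x + sin ((2 * N : ℕ) * x)) := by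
    rw [show (2 * N + 1 / 2) * x = 2 * (N * x) + x / 2 by ring, cos_add, cos_two_mul, sin_two_mul,
      show ((2 * N : ℕ) : ℝ) * x = 2 * (N * x) by push_cast; ring, sin_two_mul]
    linear_combination (-2 * cos (x / 2)) * sin_sq_add_cos_sq (N * x)
  have hbound : |sin ((2 * N : ℕ) * x)| ≤ 2 * N * sin x := by
    simpa [abs_of_pos hsin] using abs_sin_nat_mul_le (2 * N) x
  rw [hdecomp]
  rcases eq_or_ne (sin (N * x)) 0 with hzero | hnonzero
  · have hsin_two_mul : sin ((2 * N : ℕ) * x) = 0 := by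
      rw [show ((2 * N : ℕ) : ℝ) * x = 2 * (N * x) by push_cast; ring, sin_two_mul, hzero]
      ring
    have hN' : (1 : ℝ) ≤ N := by exact_mod_cast hN
    rw [hzero, hsin_two_mul]
    nlinarith [mul_pos hsin_half hsin]
  · have hsq : 0 < sin (N * x) ^ 2 := by positivity
    have hbracket : 0 ≤ 2 * N * sin x + sin ((2 * N : ℕ) * x) := by
      linarith [neg_abs_le (sin ((2 * N : ℕ) * x))]
    positivity

theorem sum_sum_cos_pos {x : ℝ} (hx : 0 < x) (hx' : x < π) (p : ℕ) :
    0 < ∑ i ∈ range (p + 1), ∑ j ∈ range (i + 1), cos ((2 * j + 1 / 2) * x) := by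
  have hpos := two_mul_sin_mul_sin_half_add_cos_sub_cos_pos hx hx' (Nat.le_add_left 1 p)
  push_cast at hpos
  rw [show 2 * ((p : ℝ) + 1) + 1 / 2 = 2 * p + 5 / 2 by ring,
    ← four_mul_sin_sq_mul_sum_sum_cos] at hpos
  exact pos_of_mul_pos_right hpos (by positivity)

theorem stmt_4_general (m n : ℕ) (hm : 1 ≤ m) (x : ℝ) (hx : 0 < x) (hx' : x < π) :
    0 < ∑ k ∈ (Finset.range (n + 1)).filter (fun k => Even k),
        ((n - k + m).choose m : ℝ) * Real.cos ((k + 1/2) * x) := by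
  set J := n / 2
  -- Since `1 ≤ m`, this vanishes for `p > n / 2`, unlike `C(n - 2p + m, m)` with truncated `-`.
  set c : ℕ → ℝ := fun p => ((n + m - 2 * p).choose m : ℝ) with hc
  have hreindex : ∑ k ∈ (range (n + 1)).filter (fun k => Even k),
      ((n - k + m).choose m : ℝ) * cos ((k + 1 / 2) * x) =
        ∑ j ∈ range (J + 1), c j * cos ((2 * j + 1 / 2) * x) := by
    rw [sum_filter_even_range]
    refine sum_congr rfl fun j hj => ?_
    rw [mem_range] at hj
    rw [hc, show n - 2 * j + m = n + m - 2 * j by omega]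
    push_cast
    rfl
  have hvanish (i : ℕ) (hi : J < i) : c i = 0 := by
    simp only [hc, Nat.choose_eq_zero_of_lt (show n + m - 2 * i < m by omega), Nat.cast_zero]
  have hconvex (p : ℕ) : 0 ≤ c p - 2 * c (p + 1) + c (p + 2) := by
    have h := two_mul_choose_sub_two_le hm (n + m - 2 * p)
    rw [show n + m - 2 * p - 2 = n + m - 2 * (p + 1) by omega,
      show n + m - 2 * p - 4 = n + m - 2 * (p + 2) by omega] at h
    have h' : (2 * (n + m - 2 * (p + 1)).choose m : ℝ) ≤
        (n + m - 2 * p).choose m + (n + m - 2 * (p + 2)).choose m := by exact_mod_cast h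
    simp only [hc]
    linarith
  rw [hreindex, sum_range_mul_eq_by_parts_twice c _ (hvanish _ (by omega)) (hvanish _ (by omega))]
  refine sum_pos' (fun p _ => mul_nonneg (hconvex p) (sum_sum_cos_pos hx hx' p).le)
    ⟨J, self_mem_range_succ J, mul_pos ?_ (sum_sum_cos_pos hx hx' J)⟩
  rw [hvanish (J + 1) (by omega), hvanish (J + 2) (by omega), hc]
  norm_num
  exact Nat.choose_pos (by omega)

theorem stmt_4 (m n : ℕ) (hm : 1 ≤ m) (hn : 1 ≤ n) (x : ℝ) (hx : 0 < x) (hx' : x < π) :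
    0 < ∑ k ∈ (Finset.range (n + 1)).filter (fun k => Even k),
        ((n - k + m).choose m : ℝ) * Real.cos ((k + 1/2) * x) :=
  stmt_4_general m n hm x hx hx'
end

section
/- For every integer n ≥ 21, L_n(2π/3 - 1/n) > 0, where L_n(x) = (18n+24)sin(x) - 18n·sin(x/2) - 29.1. -/
/-!
Put `t = 1 / r`. Expanding `sin (2π/3 - t)` and `sin (π/3 - t/2)` writes `L_r(2π/3 - t)` as
`9√3 r (cos t - cos (t/2)) + 9 r sin t + 9 r sin (t/2) + 12√3 cos t + 12 sin t - 29.1`.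
As `t → 0` this tends to `27/2 + 12√3 ≈ 34.3`, and the Taylor bounds `1 - t²/2 ≤ cos t ≤ 1`,
`t - t³/6 < sin t` already show it stays above `33` for `t ≤ 1/21`.
-/

open Real

lemma sin_two_pi_div_three_sub (t : ℝ) :
    sin (2 * π / 3 - t) = √3 / 2 * cos t + 1 / 2 * sin t := by
  rw [show 2 * π / 3 - t = π - (π / 3 + t) by ring, sin_pi_sub, sin_add, sin_pi_div_three,
    cos_pi_div_three]

lemma sin_pi_div_three_sub (t : ℝ) :
    sin (π / 3 - t) = √3 / 2 * cos t - 1 / 2 * sin t := by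
  rw [sin_sub, sin_pi_div_three, cos_pi_div_three]

lemma neg_sq_div_two_le_cos_sub_cos_half (t : ℝ) : -(t ^ 2 / 2) ≤ cos t - cos (t / 2) := by
  linarith [one_sub_sq_div_two_le_cos (x := t), cos_le_one (t / 2)]

lemma one_sub_sq_div_six_lt_mul_sin {r t : ℝ} (hr : 0 < r) (hrt : r * t = 1) :
    1 - t ^ 2 / 6 < r * sin t := by
  have ht : 0 < t := pos_of_mul_pos_right (hrt ▸ one_pos) hr.le
  calc 1 - t ^ 2 / 6 = r * (t - t ^ 3 / 6) := by linear_combination (1 - t ^ 2 / 6) * hrt.symm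
    _ < r * sin t := mul_lt_mul_of_pos_left (sin_gt_sub_cube ht) hr

lemma sqrt_three_mem_Ioo : √3 ∈ Set.Ioo (1.7 : ℝ) 2 := by
  constructor
  · rw [lt_sqrt (by norm_num)]; norm_num
  · rw [sqrt_lt' (by norm_num)]; norm_num

noncomputable def L (r x : ℝ) : ℝ := (18 * r + 24) * sin x - 18 * r * sin (x / 2) - 29.1

theorem L_two_pi_div_three_sub_inv_pos {r : ℝ} (hr : 21 ≤ r) :
    0 < L r (2 * π / 3 - 1 / r) := by
  unfold L
  have hr0 : 0 < r := by linarith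
  have hrt : r * (1 / r) = 1 := mul_one_div_cancel hr0.ne'
  have ht0 : 0 < 1 / r := by positivity
  have ht : 1 / r ≤ 1 / 21 := one_div_le_one_div_of_le (by norm_num) hr
  generalize 1 / r = t at hrt ht0 ht ⊢
  obtain ⟨hs_lo, hs_hi⟩ := sqrt_three_mem_Ioo
  have h_cos_diff : -(t / 2) ≤ r * (cos t - cos (t / 2)) := by
    have := mul_le_mul_of_nonneg_left (neg_sq_div_two_le_cos_sub_cos_half t) hr0.le
    linear_combination this + t / 2 * hrt
  have h_sin := one_sub_sq_div_six_lt_mul_sin hr0 hrt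
  have h_sin_half := one_sub_sq_div_six_lt_mul_sin (mul_pos hr0 two_pos)
    (show r * 2 * (t / 2) = 1 by linear_combination hrt)
  have h_cos : 1 - t ^ 2 / 2 ≤ cos t := one_sub_sq_div_two_le_cos
  have h_sin_pos : 0 < sin t := sin_pos_of_pos_of_lt_pi ht0 (by linarith [pi_gt_three])
  rw [sin_two_pi_div_three_sub, show (2 * π / 3 - t) / 2 = π / 3 - t / 2 by ring,
    sin_pi_div_three_sub]
  have h_expand : (18 * r + 24) * (√3 / 2 * cos t + 1 / 2 * sin t)
      - 18 * r * (√3 / 2 * cos (t / 2) - 1 / 2 * sin (t / 2)) - 29.1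
      = 9 * √3 * (r * (cos t - cos (t / 2))) + 9 * (r * sin t) + 9 * (r * sin (t / 2))
        + 12 * √3 * cos t + 12 * sin t - 29.1 := by ring
  rw [h_expand]
  nlinarith [mul_le_mul_of_nonneg_left h_cos_diff (by positivity : (0 : ℝ) ≤ √3),
    mul_le_mul_of_nonneg_left h_cos (by positivity : (0 : ℝ) ≤ √3)]

theorem stmt_16 (n : ℕ) (hn : 21 ≤ n) :
    0 < (18 * n + 24) * Real.sin (2 * π / 3 - 1 / n)
        - 18 * n * Real.sin ((2 * π / 3 - 1 / n) / 2) - 29.1 :=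
  L_two_pi_div_three_sub_inv_pos (by exact_mod_cast hn)
end
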